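/- Let $G=(V,E)$ be a finite graph, $\delta$ a nonnegative distance function, and $\gamma$ a constant with $\gamma > \sum_{v\in V}\max_{u\in N(v)}\delta(v,u)$ (where every vertex has at least one neighbor). Then any dominating set $P_1$ with $|P_1| < |P_2|$ for another dominating set $P_2$ satisfies $\mathcal{L}(P_1) < \mathcal{L}(P_2)$. -/

import Mathlib

open Finset

/-- The sliding cost of a pivot set `P`: for each non-pivot vertex `v`, the
minimum distance to a pivot among the neighbors of `v` (0 if no such pivot). -/
noncomputable def slideCost {V : Type*} [Fintype V] [DecidableEq V]
    (G : SimpleGraph V) [DecidableRel G.Adj] (δ : V → V → ℝ) (P : Finset V) : ℝ :=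
  ∑ v ∈ Finset.univ \ P,
    if h : (P ∩ G.neighborFinset v).Nonempty then
      (P ∩ G.neighborFinset v).inf' h (δ v)
    else 0

/-- The total merge cost `L(P) = γ|P| + slideCost`. -/
noncomputable def mergeCost {V : Type*} [Fintype V] [DecidableEq V]
    (G : SimpleGraph V) [DecidableRel G.Adj] (δ : V → V → ℝ) (γ : ℝ)
    (P : Finset V) : ℝ :=
  γ * P.card + slideCost G δ P

/-- `P` is a dominating set: every vertex is in `P` or adjacent to a member of `P`. -/
def IsDominatingSet {V : Type*} (G : SimpleGraph V) (P : Finset V) : Prop :=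
  ∀ v : V, v ∈ P ∨ ∃ p ∈ P, G.Adj v p

/-!
The slide cost of any pivot set lies between `0` and `S = ∑ v, max_{u ∈ N(v)} δ(v, u)`,
so once `γ > S` a single extra pivot costs more than any saving in slide cost can recover.
-/

section SlideCost

variable {V : Type*} [Fintype V] (G : SimpleGraph V) [DecidableRel G.Adj] {δ : V → V → ℝ}

theorem sup'_neighborFinset_nonneg (hδ : ∀ u v, 0 ≤ δ u v) {v : V}
    (hv : (G.neighborFinset v).Nonempty) : 0 ≤ (G.neighborFinset v).sup' hv (δ v) :=
  have ⟨u, hu⟩ := hv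
  (hδ v u).trans (Finset.le_sup' _ hu)

variable [DecidableEq V]

theorem slideCost_nonneg (hδ : ∀ u v, 0 ≤ δ u v) (P : Finset V) : 0 ≤ slideCost G δ P := by
  refine Finset.sum_nonneg fun v _ => ?_
  split_ifs with h
  · exact Finset.le_inf' h _ fun u _ => hδ v u
  · exact le_rfl

theorem slideCost_le_sum_sup' (hδ : ∀ u v, 0 ≤ δ u v)
    (hne : ∀ v, (G.neighborFinset v).Nonempty) (P : Finset V) :
    slideCost G δ P ≤ ∑ v, (G.neighborFinset v).sup' (hne v) (δ v) := by
  have hterm : ∀ v, (if h : (P ∩ G.neighborFinset v).Nonempty then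
      (P ∩ G.neighborFinset v).inf' h (δ v) else 0) ≤ (G.neighborFinset v).sup' (hne v) (δ v) := by
    intro v
    split_ifs with h
    · obtain ⟨p, hp⟩ := h
      exact (Finset.inf'_le _ hp).trans (Finset.le_sup' _ (Finset.mem_inter.1 hp).2)
    · exact sup'_neighborFinset_nonneg G hδ (hne v)
  calc slideCost G δ P
      ≤ ∑ v ∈ univ \ P, (G.neighborFinset v).sup' (hne v) (δ v) :=
        Finset.sum_le_sum fun v _ => hterm v
    _ ≤ ∑ v, (G.neighborFinset v).sup' (hne v) (δ v) :=
        Finset.sum_le_sum_of_subset_of_nonneg sdiff_subset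
          fun v _ _ => sup'_neighborFinset_nonneg G hδ (hne v)

end SlideCost

theorem mergeCost_lt_of_card_lt_general {V : Type*} [Fintype V] [DecidableEq V]
    (G : SimpleGraph V) [DecidableRel G.Adj]
    (δ : V → V → ℝ) (γ : ℝ)
    (hδ : ∀ u v : V, 0 ≤ δ u v)
    (hne : ∀ v : V, (G.neighborFinset v).Nonempty)
    (hγ : γ > ∑ v : V, (G.neighborFinset v).sup' (hne v) (δ v))
    (P₁ P₂ : Finset V)
    (hcard : P₁.card < P₂.card) :
    mergeCost G δ γ P₁ < mergeCost G δ γ P₂ := by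
  have hS : slideCost G δ P₁ < γ := (slideCost_le_sum_sup' G hδ hne P₁).trans_lt hγ
  have hγpos : 0 < γ := (slideCost_nonneg G hδ P₁).trans_lt hS
  have hcard' : (P₁.card : ℝ) + 1 ≤ P₂.card := by exact_mod_cast hcard
  calc mergeCost G δ γ P₁
      < γ * (P₁.card + 1) := by rw [mergeCost]; linarith
    _ ≤ γ * P₂.card := mul_le_mul_of_nonneg_left hcard' hγpos.le
    _ ≤ mergeCost G δ γ P₂ := le_add_of_nonneg_right (slideCost_nonneg G hδ P₂)

theorem mergeCost_lt_of_card_lt {V : Type*} [Fintype V] [DecidableEq V]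
    (G : SimpleGraph V) [DecidableRel G.Adj]
    (δ : V → V → ℝ) (γ : ℝ)
    (hδ : ∀ u v : V, 0 ≤ δ u v)
    (hne : ∀ v : V, (G.neighborFinset v).Nonempty)
    (hγ : γ > ∑ v : V, (G.neighborFinset v).sup' (hne v) (δ v))
    (P₁ P₂ : Finset V)
    (h₁ : IsDominatingSet G P₁) (h₂ : IsDominatingSet G P₂)
    (hcard : P₁.card < P₂.card) :
    mergeCost G δ γ P₁ < mergeCost G δ γ P₂ :=
  mergeCost_lt_of_card_lt_general G δ γ hδ hne hγ P₁ P₂ hcard
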